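/- Let T be a finite rooted tree with positive edge weights and let M* be constructed by the recursive top-down activation rule of the T-MWM algorithm. Then the total weight of M* equals max(F(root), G(root)); in particular M* is a maximum weight matching of T. -/

import Mathlib

/-- A finite rooted tree on the vertex type `V`, encoded by a parent function together
with a depth function certifying acyclicity. The edges are the pairs
`(parent c, c)` for `c ≠ root`; an edge is identified with its child endpoint `c`. -/
structure RTree (V : Type*) where
  root : V
  parent : V → V
  parent_root : parent root = root
  depth : V → ℕ
  depth_root : depth root = 0
  depth_parent : ∀ v, v ≠ root → depth (parent v) + 1 = depth v

namespace RTree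

variable {V : Type*} [Fintype V] [DecidableEq V]

/-- `u` lies in the subtree rooted at `v` (i.e. `u` is `v` or a descendant of `v`). -/
def Desc (T : RTree V) (v u : V) : Prop := ∃ k, T.parent^[k] u = v

/-- The children of `v`. -/
def children (T : RTree V) (v : V) : Finset V :=
  Finset.univ.filter fun c => T.parent c = v ∧ c ≠ T.root

/-- A finset `M` of non-root vertices, each `c ∈ M` representing the tree edge
`(parent c, c)`, is a matching if the corresponding edges are pairwise
vertex-disjoint. -/
def IsTreeMatching (T : RTree V) (M : Finset V) : Prop :=
  (∀ c ∈ M, c ≠ T.root) ∧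
  ∀ c ∈ M, ∀ c' ∈ M, c ≠ c' →
    T.parent c ≠ T.parent c' ∧ T.parent c ≠ c' ∧ c ≠ T.parent c'

/-- A matching all of whose edges lie in the subtree rooted at `v`. -/
def IsSubtreeMatching (T : RTree V) (v : V) (M : Finset V) : Prop :=
  T.IsTreeMatching M ∧ ∀ c ∈ M, T.Desc v c ∧ c ≠ v

/-- The weight of a matching: the sum of the weights of its edges, where `w c` is
the weight of the edge `(parent c, c)`. -/
noncomputable def wSum (w : V → ℝ) (M : Finset V) : ℝ := ∑ c ∈ M, w c

/-- `F(v)`: the maximum weight of a matching of the subtree rooted at `v` that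
contains an edge from `v` to one of its children (the max over the empty set,
e.g. at leaves, is `0` by the real `sSup` convention). -/
noncomputable def Fval (T : RTree V) (w : V → ℝ) (v : V) : ℝ :=
  sSup {x | ∃ M, T.IsSubtreeMatching v M ∧ (∃ c ∈ M, T.parent c = v) ∧ x = wSum w M}

/-- `G(v)`: the maximum weight of a matching of the subtree rooted at `v` that
contains no edge incident to `v`. -/
noncomputable def Gval (T : RTree V) (w : V → ℝ) (v : V) : ℝ :=
  sSup {x | ∃ M, T.IsSubtreeMatching v M ∧ (∀ c ∈ M, T.parent c ≠ v) ∧ x = wSum w M}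

end RTree

namespace RTree

variable {V : Type*} [Fintype V] [DecidableEq V]

/-- The child of `v` maximizing `w c + G(c) - max(F c, G c)` (ties broken arbitrarily);
defaults to the root if `v` has no children. -/
noncomputable def bestChild (T : RTree V) (w : V → ℝ) (v : V) : V :=
  if h : (T.children v).Nonempty then
    Classical.choose ((T.children v).exists_max_image
      (fun c => w c + T.Gval w c - max (T.Fval w c) (T.Gval w c)) h)
  else T.root

open Classical in
/-- The fuel-indexed top-down activation rule of the `T-MWM` algorithm: at `v`, if
`F(v) ≥ G(v)` (and `v` is internal), activate the edge `(v, m)` where `m` is the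
best child, then recurse on the subtrees of the other children of `v` and on the
children of `m`; otherwise recurse on the subtrees of all children of `v`. -/
noncomputable def build (T : RTree V) (w : V → ℝ) : ℕ → V → Finset V
  | 0, _ => ∅
  | n + 1, v =>
    if (T.children v).Nonempty ∧ T.Gval w v ≤ T.Fval w v then
      insert (T.bestChild w v)
        (((T.children v).erase (T.bestChild w v)).biUnion (T.build w n) ∪
          (T.children (T.bestChild w v)).biUnion (T.build w n))
    else (T.children v).biUnion (T.build w n)

/-- The edge set `M*` constructed by the T-MWM algorithm, starting from the root
(with enough fuel to exhaust the tree). -/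
noncomputable def mstar (T : RTree V) (w : V → ℝ) : Finset V :=
  T.build w (Fintype.card V) T.root

end RTree

/-!
Cut a matching of the subtree at `v` along the children `c` of `v`: apart from at most one edge
`(v, e)` it splits into matchings of the subtrees at the `c`, and the one at `e` must avoid `e`.
Hence `G(v) = ∑_c max(F c, G c)` and `F(v) = ∑_c max(F c, G c) + max_m (w m + G m - max(F m, G m))`,
the maximum being attained at `bestChild`. The activation rule realises exactly these two
recurrences, so by induction on the height `build` returns, at every vertex `v`, a matching of the
subtree at `v` of weight `max(F v, G v)`; at the root this is a maximum weight matching of `T`.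
-/

theorem Finset.biUnion_update {α β : Type*} [DecidableEq α] [DecidableEq β] {s : Finset α}
    {a : α} (ha : a ∈ s) (t : α → Finset β) (b : Finset β) :
    s.biUnion (Function.update t a b) = (s.erase a).biUnion t ∪ b := by
  conv_lhs => rw [← Finset.insert_erase ha]
  rw [Finset.biUnion_insert, Function.update_self, Finset.union_comm]
  exact congrArg (· ∪ b) <| Finset.biUnion_congr rfl fun c hc =>
    Function.update_of_ne (Finset.ne_of_mem_erase hc) _ _

namespace RTree

section Depth

variable {V : Type*} (T : RTree V)

lemma iterate_parent_root (k : ℕ) : T.parent^[k] T.root = T.root :=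
  Function.iterate_fixed T.parent_root k

lemma eq_root_of_depth_eq_zero {u : V} (h : T.depth u = 0) : u = T.root := by
  by_contra hu
  have := T.depth_parent u hu
  omega

lemma depth_iterate_parent_add {u : V} {k : ℕ} (hk : k ≤ T.depth u) :
    T.depth (T.parent^[k] u) + k = T.depth u := by
  induction k with
  | zero => rfl
  | succ k ih =>
    have ih := ih (by omega)
    have hne : T.parent^[k] u ≠ T.root := fun h => by rw [h, T.depth_root] at ih; omega
    have := T.depth_parent _ hne
    rw [Function.iterate_succ_apply']
    omega

lemma depth_add_of_iterate_parent_eq {u c : V} {k : ℕ} (h : T.parent^[k] u = c)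
    (hc : c ≠ T.root) : T.depth c + k = T.depth u := by
  induction k generalizing u with
  | zero => simp_all
  | succ k ih =>
    rw [Function.iterate_succ_apply] at h
    have hu : u ≠ T.root := by
      rintro rfl
      rw [T.parent_root, iterate_parent_root] at h
      exact hc h.symm
    have := T.depth_parent u hu
    have := ih h
    omega

lemma depth_lt_card [Fintype V] (u : V) : T.depth u < Fintype.card V := by
  have hinj : Function.Injective fun k : Fin (T.depth u + 1) => T.parent^[k] u := by
    intro a b hab
    have ha := T.depth_iterate_parent_add (u := u) (k := a) (Nat.lt_succ_iff.1 a.2)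
    have hb := T.depth_iterate_parent_add (u := u) (k := b) (Nat.lt_succ_iff.1 b.2)
    rw [show T.parent^[a] u = T.parent^[b] u from hab] at ha
    exact Fin.ext (by omega)
  simpa using Fintype.card_le_of_injective _ hinj

lemma desc_root (u : V) : T.Desc T.root u := by
  refine ⟨T.depth u, T.eq_root_of_depth_eq_zero ?_⟩
  have := T.depth_iterate_parent_add (le_refl (T.depth u))
  omega

variable {T}

lemma Desc.refl (v : V) : T.Desc v v := ⟨0, rfl⟩

lemma Desc.trans {x v u : V} (h₁ : T.Desc x v) (h₂ : T.Desc v u) : T.Desc x u := by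
  obtain ⟨j, hj⟩ := h₁
  obtain ⟨k, hk⟩ := h₂
  exact ⟨j + k, by rw [Function.iterate_add_apply, hk, hj]⟩

lemma Desc.parent_of_ne {c u : V} (h : T.Desc c u) (hu : u ≠ c) : T.Desc c (T.parent u) := by
  obtain ⟨_ | k, hk⟩ := h
  · exact absurd hk hu
  · exact ⟨k, by rwa [← Function.iterate_succ_apply]⟩

lemma Desc.ne_root {c u : V} (h : T.Desc c u) (hc : c ≠ T.root) : u ≠ T.root := by
  rintro rfl
  obtain ⟨k, hk⟩ := h
  exact hc (hk ▸ T.iterate_parent_root k)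

end Depth

section Children

variable {V : Type*} [Fintype V] [DecidableEq V] (T : RTree V)

lemma mem_children {v c : V} : c ∈ T.children v ↔ T.parent c = v ∧ c ≠ T.root := by
  simp [children]

variable {T}

lemma depth_of_mem_children {v c : V} (hc : c ∈ T.children v) :
    T.depth c = T.depth v + 1 := by
  obtain ⟨rfl, hr⟩ := T.mem_children.1 hc
  exact (T.depth_parent c hr).symm

lemma desc_of_mem_children {v c : V} (hc : c ∈ T.children v) : T.Desc v c :=
  ⟨1, (T.mem_children.1 hc).1⟩

lemma ne_of_mem_children_of_desc {v c u : V} (hc : c ∈ T.children v) (h : T.Desc c u) :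
    u ≠ v := by
  rintro rfl
  obtain ⟨k, hk⟩ := h
  have := T.depth_add_of_iterate_parent_eq hk (T.mem_children.1 hc).2
  have := depth_of_mem_children hc
  omega

lemma eq_of_mem_children_of_desc {v c c' u : V} (hc : c ∈ T.children v)
    (hc' : c' ∈ T.children v) (h : T.Desc c u) (h' : T.Desc c' u) : c = c' := by
  obtain ⟨k, rfl⟩ := h
  obtain ⟨k', rfl⟩ := h'
  have := T.depth_add_of_iterate_parent_eq rfl (T.mem_children.1 hc).2
  have := T.depth_add_of_iterate_parent_eq rfl (T.mem_children.1 hc').2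
  have := depth_of_mem_children hc
  have := depth_of_mem_children hc'
  rw [show k = k' by omega]

lemma not_desc_of_mem_children {v c c' x : V} (hc : c ∈ T.children v)
    (hc' : c' ∈ T.children v) (hne : c ≠ c') (h : T.Desc c x) : ¬T.Desc c' x :=
  fun h' => hne (eq_of_mem_children_of_desc hc hc' h h')

lemma parent_ne_of_mem_children_of_desc {v c u : V} (hc : c ∈ T.children v) (h : T.Desc c u)
    (hu : u ≠ c) : T.parent u ≠ v := fun hpu =>
  hu (eq_of_mem_children_of_desc (T.mem_children.2 ⟨hpu, h.ne_root (T.mem_children.1 hc).2⟩)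
    hc (Desc.refl u) h)

lemma exists_mem_children_desc {v u : V} (h : T.Desc v u) (hu : u ≠ v) :
    ∃ c ∈ T.children v, T.Desc c u := by
  obtain ⟨k, hk⟩ := h
  induction k with
  | zero => exact absurd hk hu
  | succ k ih =>
    rw [Function.iterate_succ_apply'] at hk
    by_cases hr : T.parent^[k] u = T.root
    · rw [hr, T.parent_root] at hk
      exact ih (hr.trans hk)
    · exact ⟨_, T.mem_children.2 ⟨hk, hr⟩, k, rfl⟩

end Children

section Matching

variable {V : Type*} {T : RTree V}

lemma IsTreeMatching.subset {M M' : Finset V} (hM : T.IsTreeMatching M) (h : M' ⊆ M) :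
    T.IsTreeMatching M' :=
  ⟨fun c hc => hM.1 c (h hc), fun c hc c' hc' => hM.2 c (h hc) c' (h hc')⟩

lemma IsTreeMatching.isSubtreeMatching_root {M : Finset V} (hM : T.IsTreeMatching M) :
    T.IsSubtreeMatching T.root M :=
  ⟨hM, fun c hc => ⟨T.desc_root c, hM.1 c hc⟩⟩

variable (T) in
lemma isSubtreeMatching_empty (v : V) : T.IsSubtreeMatching v ∅ := by
  refine ⟨⟨?_, ?_⟩, ?_⟩ <;> simp

variable (T) in
open Classical in
noncomputable def restrict (c : V) (M : Finset V) : Finset V :=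
  M.filter fun u => T.Desc c u ∧ u ≠ c

lemma mem_restrict {c u : V} {M : Finset V} :
    u ∈ T.restrict c M ↔ u ∈ M ∧ T.Desc c u ∧ u ≠ c := by
  simp [restrict]

lemma IsTreeMatching.isSubtreeMatching_restrict {M : Finset V} (hM : T.IsTreeMatching M)
    (c : V) : T.IsSubtreeMatching c (T.restrict c M) :=
  ⟨hM.subset fun _ hu => (mem_restrict.1 hu).1, fun _ hu => (mem_restrict.1 hu).2⟩

lemma IsTreeMatching.parent_ne_of_mem_restrict {M : Finset V} {e u : V}
    (hM : T.IsTreeMatching M) (he : e ∈ M) (hu : u ∈ T.restrict e M) : T.parent u ≠ e := by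
  obtain ⟨huM, -, hue⟩ := mem_restrict.1 hu
  exact fun hpu => (hM.2 e he u huM (Ne.symm hue)).2.2 hpu.symm

variable [DecidableEq V]

lemma IsTreeMatching.filter_parent_eq {M : Finset V} {v e : V} (hM : T.IsTreeMatching M)
    (he : e ∈ M) (hev : T.parent e = v) : M.filter (T.parent · = v) = {e} := by
  ext u
  simp only [Finset.mem_filter, Finset.mem_singleton]
  refine ⟨fun ⟨hu, huv⟩ => ?_, by rintro rfl; exact ⟨he, hev⟩⟩
  by_contra hne
  exact (hM.2 u hu e he hne).1 (huv.trans hev.symm)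

variable [Fintype V]

lemma IsSubtreeMatching.insert {M : Finset V} {v m : V} (hM : T.IsSubtreeMatching v M)
    (hm : m ∈ T.children v) (h : ∀ u ∈ M, T.parent u ≠ v ∧ u ≠ m ∧ T.parent u ≠ m) :
    T.IsSubtreeMatching v (insert m M) := by
  obtain ⟨hmv, hmr⟩ := T.mem_children.1 hm
  have hdisj : ∀ u ∈ M, T.parent m ≠ T.parent u ∧ T.parent m ≠ u ∧ m ≠ T.parent u := by
    intro u hu
    obtain ⟨huv, hum, hpum⟩ := h u hu
    exact ⟨hmv ▸ huv.symm, hmv ▸ (hM.2 u hu).2.symm, hpum.symm⟩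
  refine ⟨⟨?_, ?_⟩, ?_⟩
  · simpa only [Finset.forall_mem_insert] using ⟨hmr, hM.1.1⟩
  · simp only [Finset.mem_insert]
    rintro u (rfl | hu) u' (rfl | hu') hne
    · exact absurd rfl hne
    · exact hdisj u' hu'
    · obtain ⟨h₁, h₂, h₃⟩ := hdisj u hu
      exact ⟨h₁.symm, h₃.symm, h₂.symm⟩
    · exact hM.1.2 u hu u' hu' hne
  · simpa only [Finset.forall_mem_insert] using
      ⟨⟨desc_of_mem_children hm, ne_of_mem_children_of_desc hm (Desc.refl m)⟩, hM.2⟩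

lemma biUnion_restrict {M : Finset V} {v : V} (hM : ∀ u ∈ M, T.Desc v u ∧ u ≠ v) :
    (T.children v).biUnion (T.restrict · M) = M.filter (T.parent · ≠ v) := by
  ext u
  simp only [Finset.mem_biUnion, mem_restrict, Finset.mem_filter]
  constructor
  · rintro ⟨c, hc, huM, hcu, huc⟩
    exact ⟨huM, parent_ne_of_mem_children_of_desc hc hcu huc⟩
  · rintro ⟨huM, hpu⟩
    obtain ⟨c, hc, hcu⟩ := exists_mem_children_desc (hM u huM).1 (hM u huM).2
    refine ⟨c, hc, huM, hcu, ?_⟩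
    rintro rfl
    exact hpu (T.mem_children.1 hc).1

lemma isSubtreeMatching_biUnion_children {v : V} {K : V → Finset V}
    (hK : ∀ c ∈ T.children v, T.IsSubtreeMatching c (K c)) :
    T.IsSubtreeMatching v ((T.children v).biUnion K) ∧
      ∀ u ∈ (T.children v).biUnion K, T.parent u ≠ v := by
  have below : ∀ u ∈ (T.children v).biUnion K, ∃ c ∈ T.children v, u ∈ K c ∧
      T.Desc c u ∧ u ≠ c ∧ T.Desc c (T.parent u) := fun u hu => by
    obtain ⟨c, hc, hu⟩ := Finset.mem_biUnion.1 hu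
    obtain ⟨hd, hne⟩ := (hK c hc).2 u hu
    exact ⟨c, hc, hu, hd, hne, hd.parent_of_ne hne⟩
  refine ⟨⟨⟨fun u hu => ?_, fun u hu u' hu' hne => ?_⟩, fun u hu => ?_⟩, fun u hu => ?_⟩
  · obtain ⟨c, hc, hu, -⟩ := below u hu
    exact (hK c hc).1.1 u hu
  · obtain ⟨c, hc, hu, hd, -, hdp⟩ := below u hu
    obtain ⟨c', hc', hu', hd', -, hdp'⟩ := below u' hu'
    by_cases hcc : c = c'
    · subst hcc
      exact (hK c hc).1.2 u hu u' hu' hne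
    have apart := fun x (hx : T.Desc c x) y (hy : T.Desc c' y) (hxy : x = y) =>
      not_desc_of_mem_children hc hc' hcc hx (hxy ▸ hy)
    exact ⟨apart _ hdp _ hdp', apart _ hdp _ hd', apart _ hd _ hdp'⟩
  · obtain ⟨c, hc, -, hd, -⟩ := below u hu
    exact ⟨(desc_of_mem_children hc).trans hd, ne_of_mem_children_of_desc hc hd⟩
  · obtain ⟨c, hc, -, hd, hne, -⟩ := below u hu
    exact parent_ne_of_mem_children_of_desc hc hd hne

lemma wSum_biUnion_children (w : V → ℝ) {v : V} {K : V → Finset V}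
    (hK : ∀ c ∈ T.children v, ∀ u ∈ K c, T.Desc c u) :
    wSum w ((T.children v).biUnion K) = ∑ c ∈ T.children v, wSum w (K c) :=
  Finset.sum_biUnion fun c hc c' hc' hne => Finset.disjoint_left.2 fun u hu hu' =>
    not_desc_of_mem_children hc hc' hne (hK c hc u hu) (hK c' hc' u hu')

lemma wSum_eq_add_sum_restrict (w : V → ℝ) {M : Finset V} {v : V}
    (hM : T.IsSubtreeMatching v M) :
    wSum w M = wSum w (M.filter (T.parent · = v)) +
      ∑ c ∈ T.children v, wSum w (T.restrict c M) := by
  rw [← wSum_biUnion_children w fun c _ u hu => (mem_restrict.1 hu).2.1, biUnion_restrict hM.2]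
  exact (Finset.sum_filter_add_sum_filter_not M _ w).symm

lemma isSubtreeMatching_activate (w : V → ℝ) {v m : V} {K : V → Finset V} {B : Finset V}
    (hm : m ∈ T.children v) (hK : ∀ c ∈ (T.children v).erase m, T.IsSubtreeMatching c (K c))
    (hB : T.IsSubtreeMatching m B) (hBm : ∀ u ∈ B, T.parent u ≠ m) :
    T.IsSubtreeMatching v (insert m (((T.children v).erase m).biUnion K ∪ B)) ∧
      wSum w (insert m (((T.children v).erase m).biUnion K ∪ B)) =
        w m + wSum w B + ∑ c ∈ (T.children v).erase m, wSum w (K c) := by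
  set K' := Function.update K m B
  have hK' : ∀ c ∈ T.children v, T.IsSubtreeMatching c (K' c) := by
    intro c hc
    by_cases hcm : c = m
    · subst hcm
      simpa [K'] using hB
    · simpa [K', hcm] using hK c (Finset.mem_erase.2 ⟨hcm, hc⟩)
  obtain ⟨hU, hUv⟩ := isSubtreeMatching_biUnion_children hK'
  have hUm : ∀ u ∈ (T.children v).biUnion K', u ≠ m ∧ T.parent u ≠ m := by
    intro u hu
    obtain ⟨c, hc, hu⟩ := Finset.mem_biUnion.1 hu
    by_cases hcm : c = m
    · subst hcm
      simp only [K', Function.update_self] at hu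
      exact ⟨(hB.2 u hu).2, hBm u hu⟩
    · obtain ⟨hd, hne⟩ := (hK' c hc).2 u hu
      have avoid : ∀ x, T.Desc c x → x ≠ m := by
        rintro x hx rfl
        exact not_desc_of_mem_children hc hm hcm hx (Desc.refl x)
      exact ⟨avoid u hd, avoid _ (hd.parent_of_ne hne)⟩
  rw [← Finset.biUnion_update hm]
  refine ⟨hU.insert hm fun u hu => ⟨hUv u hu, hUm u hu⟩, ?_⟩
  rw [wSum, Finset.sum_insert fun h => (hUm m h).1 rfl, ← wSum,
    wSum_biUnion_children w fun c hc u hu => ((hK' c hc).2 u hu).1]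
  simp only [K', Function.apply_update (fun _ => wSum w), Finset.sum_update_of_mem hm,
    Finset.sdiff_singleton_eq_erase]
  ring

end Matching

section Recurrences

variable {V : Type*} {T : RTree V} (w : V → ℝ)

lemma Fval_eq_zero {v : V} (h : ¬∃ M, T.IsSubtreeMatching v M ∧ ∃ c ∈ M, T.parent c = v) :
    T.Fval w v = 0 := by
  refine (congrArg sSup (Set.eq_empty_of_forall_notMem ?_)).trans Real.sSup_empty
  rintro _ ⟨M, hM, hv, -⟩
  exact h ⟨M, hM, hv⟩

variable [Fintype V]

lemma finite_wSum (p q : Finset V → Prop) : {x | ∃ M, p M ∧ q M ∧ x = wSum w M}.Finite :=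
  (Set.finite_range (wSum w)).subset (by rintro _ ⟨M, -, -, rfl⟩; exact ⟨M, rfl⟩)

lemma exists_wSum_eq_sSup {p q : Finset V → Prop} (h : ∃ M, p M ∧ q M) :
    ∃ M, p M ∧ q M ∧ wSum w M = sSup {x | ∃ M, p M ∧ q M ∧ x = wSum w M} := by
  obtain ⟨M, hp, hq⟩ := h
  obtain ⟨M, hp, hq, hM⟩ := Set.Nonempty.csSup_mem
    (s := {x | ∃ M, p M ∧ q M ∧ x = wSum w M}) ⟨_, M, hp, hq, rfl⟩ (finite_wSum w p q)
  exact ⟨M, hp, hq, hM.symm⟩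

lemma le_Fval {v : V} {M : Finset V} (hM : T.IsSubtreeMatching v M)
    (hv : ∃ c ∈ M, T.parent c = v) : wSum w M ≤ T.Fval w v :=
  le_csSup (finite_wSum w _ _).bddAbove ⟨M, hM, hv, rfl⟩

lemma le_Gval {v : V} {M : Finset V} (hM : T.IsSubtreeMatching v M)
    (hv : ∀ c ∈ M, T.parent c ≠ v) : wSum w M ≤ T.Gval w v :=
  le_csSup (finite_wSum w _ _).bddAbove ⟨M, hM, hv, rfl⟩

lemma wSum_le_max {v : V} {M : Finset V} (hM : T.IsSubtreeMatching v M) :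
    wSum w M ≤ max (T.Fval w v) (T.Gval w v) := by
  by_cases hv : ∃ c ∈ M, T.parent c = v
  · exact (le_Fval w hM hv).trans (le_max_left _ _)
  · exact (le_Gval w hM (by simpa using hv)).trans (le_max_right _ _)

variable (T)

lemma exists_wSum_eq_Gval (v : V) :
    ∃ M, T.IsSubtreeMatching v M ∧ (∀ c ∈ M, T.parent c ≠ v) ∧ wSum w M = T.Gval w v :=
  exists_wSum_eq_sSup w ⟨∅, T.isSubtreeMatching_empty v, by simp⟩

lemma Gval_nonneg (v : V) : 0 ≤ T.Gval w v := by
  simpa [wSum] using le_Gval w (T.isSubtreeMatching_empty v) (by simp)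

lemma exists_wSum_eq_max (v : V) :
    ∃ M, T.IsSubtreeMatching v M ∧ wSum w M = max (T.Fval w v) (T.Gval w v) := by
  obtain ⟨MG, hMG, -, hG⟩ := T.exists_wSum_eq_Gval w v
  by_cases hF : ∃ M, T.IsSubtreeMatching v M ∧ ∃ c ∈ M, T.parent c = v
  · obtain ⟨MF, hMF, -, hF⟩ := exists_wSum_eq_sSup w hF
    rcases max_choice (T.Fval w v) (T.Gval w v) with h | h
    · exact ⟨MF, hMF, by rw [h]; exact hF⟩
    · exact ⟨MG, hMG, by rw [h, hG]⟩
  · exact ⟨MG, hMG, by rw [hG, Fval_eq_zero w hF, max_eq_right (T.Gval_nonneg w v)]⟩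

variable [DecidableEq V]

theorem Gval_eq_sum (v : V) :
    T.Gval w v = ∑ c ∈ T.children v, max (T.Fval w c) (T.Gval w c) := by
  choose K hK hKw using T.exists_wSum_eq_max w
  obtain ⟨hU, hUv⟩ := isSubtreeMatching_biUnion_children fun c (_ : c ∈ T.children v) => hK c
  refine le_antisymm (csSup_le ?_ ?_) ?_
  · exact ⟨_, _, hU, hUv, rfl⟩
  · rintro _ ⟨M, hM, hMv, rfl⟩
    rw [wSum_eq_add_sum_restrict w hM, Finset.filter_false_of_mem hMv, wSum,
      Finset.sum_empty, zero_add]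
    exact Finset.sum_le_sum fun c _ => wSum_le_max w (hM.1.isSubtreeMatching_restrict c)
  · calc ∑ c ∈ T.children v, max (T.Fval w c) (T.Gval w c)
        = wSum w ((T.children v).biUnion K) := by
          rw [wSum_biUnion_children w fun c _ u hu => ((hK c).2 u hu).1]
          exact Finset.sum_congr rfl fun c _ => (hKw c).symm
      _ ≤ T.Gval w v := le_Gval w hU hUv

lemma bestChild_spec {v : V} (hv : (T.children v).Nonempty) :
    T.bestChild w v ∈ T.children v ∧ ∀ c ∈ T.children v,
      w c + T.Gval w c - max (T.Fval w c) (T.Gval w c) ≤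
        w (T.bestChild w v) + T.Gval w (T.bestChild w v) -
          max (T.Fval w (T.bestChild w v)) (T.Gval w (T.bestChild w v)) := by
  rw [bestChild, dif_pos hv]
  exact Classical.choose_spec ((T.children v).exists_max_image _ hv)

lemma wSum_le_bestChild {v e : V} {M : Finset V} (hM : T.IsSubtreeMatching v M) (he : e ∈ M)
    (hev : T.parent e = v) :
    wSum w M ≤ w (T.bestChild w v) + T.Gval w (T.bestChild w v) +
      ∑ c ∈ (T.children v).erase (T.bestChild w v), max (T.Fval w c) (T.Gval w c) := by
  have hec : e ∈ T.children v := T.mem_children.2 ⟨hev, hM.1.1 e he⟩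
  obtain ⟨hm, hbest⟩ := T.bestChild_spec w ⟨e, hec⟩
  have hres_e : wSum w (T.restrict e M) ≤ T.Gval w e :=
    le_Gval w (hM.1.isSubtreeMatching_restrict e) fun _ hu => hM.1.parent_ne_of_mem_restrict he hu
  have hres : ∑ c ∈ (T.children v).erase e, wSum w (T.restrict c M) ≤
      ∑ c ∈ (T.children v).erase e, max (T.Fval w c) (T.Gval w c) :=
    Finset.sum_le_sum fun c _ => wSum_le_max w (hM.1.isSubtreeMatching_restrict c)
  have hsum_e := Finset.add_sum_erase _ (fun c => max (T.Fval w c) (T.Gval w c)) hec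
  have hsum_m := Finset.add_sum_erase _ (fun c => max (T.Fval w c) (T.Gval w c)) hm
  rw [wSum_eq_add_sum_restrict w hM, hM.1.filter_parent_eq he hev,
    ← Finset.add_sum_erase _ _ hec]
  simp only [wSum, Finset.sum_singleton] at hres_e hres hsum_e hsum_m ⊢
  linarith [hbest e hec]

theorem Fval_eq_bestChild {v : V} (hv : (T.children v).Nonempty) :
    T.Fval w v = w (T.bestChild w v) + T.Gval w (T.bestChild w v) +
      ∑ c ∈ (T.children v).erase (T.bestChild w v), max (T.Fval w c) (T.Gval w c) := by
  have hm := (T.bestChild_spec w hv).1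
  choose K hK hKw using T.exists_wSum_eq_max w
  obtain ⟨B, hB, hBm, hBw⟩ := T.exists_wSum_eq_Gval w (T.bestChild w v)
  obtain ⟨hM, hMw⟩ := isSubtreeMatching_activate w hm (fun c _ => hK c) hB hBm
  have hMv : ∃ c ∈ insert (T.bestChild w v) (((T.children v).erase (T.bestChild w v)).biUnion K ∪ B),
      T.parent c = v := ⟨_, Finset.mem_insert_self _ _, (T.mem_children.1 hm).1⟩
  refine le_antisymm (csSup_le ?_ ?_) ?_
  · exact ⟨_, _, hM, hMv, rfl⟩
  · rintro _ ⟨M, hM, ⟨e, he, hev⟩, rfl⟩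
    exact T.wSum_le_bestChild w hM he hev
  · have := le_Fval w hM hMv
    rwa [hMw, hBw, Finset.sum_congr rfl fun c _ => hKw c] at this

end Recurrences

section Algorithm

variable {V : Type*} [Fintype V] [DecidableEq V] (T : RTree V) (w : V → ℝ)

lemma biUnion_children_of_optimal {v : V} {K : V → Finset V}
    (hK : ∀ c ∈ T.children v, T.IsSubtreeMatching c (K c) ∧
      wSum w (K c) = max (T.Fval w c) (T.Gval w c)) :
    T.IsSubtreeMatching v ((T.children v).biUnion K) ∧
      (∀ u ∈ (T.children v).biUnion K, T.parent u ≠ v) ∧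
      wSum w ((T.children v).biUnion K) = T.Gval w v := by
  obtain ⟨hU, hUv⟩ := isSubtreeMatching_biUnion_children fun c hc => (hK c hc).1
  refine ⟨hU, hUv, ?_⟩
  rw [wSum_biUnion_children w fun c hc u hu => (((hK c hc).1).2 u hu).1, Gval_eq_sum]
  exact Finset.sum_congr rfl fun c hc => (hK c hc).2

theorem build_spec {n : ℕ} {v : V} (hn : Fintype.card V ≤ T.depth v + n) :
    T.IsSubtreeMatching v (T.build w n v) ∧
      wSum w (T.build w n v) = max (T.Fval w v) (T.Gval w v) := by
  induction n generalizing v with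
  | zero => exact absurd hn (by have := T.depth_lt_card v; omega)
  | succ n ih =>
    have ih_below : ∀ c, T.depth v < T.depth c → _ := fun c hc => ih (v := c) (by omega)
    have ih_child : ∀ c ∈ T.children v, _ := fun c hc =>
      ih_below c (by rw [depth_of_mem_children hc]; omega)
    by_cases hcond : (T.children v).Nonempty ∧ T.Gval w v ≤ T.Fval w v
    · obtain ⟨hv, hGF⟩ := hcond
      set m := T.bestChild w v
      have hm : m ∈ T.children v := (T.bestChild_spec w hv).1
      obtain ⟨hB, hBm, hBw⟩ := T.biUnion_children_of_optimal w (K := T.build w n) fun d hd =>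
        ih_below d (by rw [depth_of_mem_children hd, depth_of_mem_children hm]; omega)
      obtain ⟨hM, hMw⟩ := isSubtreeMatching_activate w hm
        (fun c hc => (ih_child c (Finset.mem_of_mem_erase hc)).1) hB hBm
      rw [build, if_pos ⟨hv, hGF⟩]
      refine ⟨hM, ?_⟩
      rw [hMw, hBw, max_eq_left hGF, T.Fval_eq_bestChild w hv,
        Finset.sum_congr rfl fun c hc => (ih_child c (Finset.mem_of_mem_erase hc)).2]
    · obtain ⟨hU, -, hUw⟩ := T.biUnion_children_of_optimal w ih_child
      rw [build, if_neg hcond]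
      refine ⟨hU, hUw.trans (max_eq_right ?_).symm⟩
      rcases (T.children v).eq_empty_or_nonempty with hv | hv
      · rw [Fval_eq_zero w fun ⟨M, hM, e, he, hev⟩ =>
          Finset.notMem_empty e (hv ▸ T.mem_children.2 ⟨hev, hM.1.1 e he⟩)]
        exact T.Gval_nonneg w v
      · exact (not_le.1 fun hGF => hcond ⟨hv, hGF⟩).le

end Algorithm

end RTree

theorem stmt11_general {V : Type*} [Fintype V] [DecidableEq V] (T : RTree V) (w : V → ℝ) :
    RTree.wSum w (T.mstar w) = max (T.Fval w T.root) (T.Gval w T.root) ∧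
      T.IsTreeMatching (T.mstar w) ∧
      ∀ M, T.IsTreeMatching M → RTree.wSum w M ≤ RTree.wSum w (T.mstar w) := by
  obtain ⟨hM, hMw⟩ := T.build_spec w (n := Fintype.card V) (v := T.root) (by omega)
  exact ⟨hMw, hM.1, fun M hM' => hMw ▸ RTree.wSum_le_max w hM'.isSubtreeMatching_root⟩

theorem stmt11 {V : Type*} [Fintype V] [DecidableEq V] (T : RTree V) (w : V → ℝ)
    (hw : ∀ v, v ≠ T.root → 0 < w v) :
    RTree.wSum w (T.mstar w) = max (T.Fval w T.root) (T.Gval w T.root) ∧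
      T.IsTreeMatching (T.mstar w) ∧
      ∀ M, T.IsTreeMatching M → RTree.wSum w M ≤ RTree.wSum w (T.mstar w) :=
  stmt11_general T w
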